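/- Let n ≥ 1, p > 1, r > 0, and let w be a weight on ℂⁿ belonging to A_{p,r}. Then for every δ with 0 < δ < 1 there exists ε with 0 < ε < 1 such that for every cube Q_r of side length r and every measurable set S ⊆ Q_r with v(S) ≤ δ · v(Q_r), one has w(S) ≤ ε · w(Q_r). -/

import Mathlib

open MeasureTheory ENNReal Metric

noncomputable section

/-- We identify `ℂⁿ` with `ℝ^{2n}` equipped with Lebesgue measure. -/
abbrev En (n : ℕ) := EuclideanSpace ℂ (Fin n)

instance (n : ℕ) : MeasurableSpace (En n) := borel _
instance (n : ℕ) : BorelSpace (En n) := ⟨rfl⟩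
instance (n : ℕ) : InnerProductSpace ℝ (En n) := InnerProductSpace.complexToReal

/-- The axis-parallel cube with center `z` and side length `r`. -/
def cube (n : ℕ) (r : ℝ) (z : En n) : Set (En n) :=
  {u | ∀ j, |(u j).re - (z j).re| ≤ r / 2 ∧ |(u j).im - (z j).im| ≤ r / 2}

/-- A weight on `ℂⁿ`: measurable, positive a.e. and locally integrable. -/
def IsWeight (n : ℕ) (w : En n → ℝ) : Prop :=
  Measurable w ∧ (∀ᵐ z : En n, 0 < w z) ∧ LocallyIntegrable w volume

/-- The restricted Muckenhoupt condition `A_{p,r}`. -/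
def MemApr (n : ℕ) (p r : ℝ) (w : En n → ℝ) : Prop :=
  ∃ C : ℝ, ∀ z : En n,
    ((volume (cube n r z))⁻¹ * ∫⁻ u in cube n r z, ENNReal.ofReal (w u)) *
      ((volume (cube n r z))⁻¹ *
        ∫⁻ u in cube n r z, ENNReal.ofReal (w u ^ (-(1 / (p - 1))))) ^ (p - 1)
      ≤ ENNReal.ofReal C

/-! Hölder's inequality applied to `1 = w^{1/p} · w^{-1/p}` gives `|E|^p ≤ w(E) σ(E)^{p-1}` with
`σ = w^{-1/(p-1)}`, for every set `E`. Combined with the `A_{p,r}` bound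
`w(Q) σ(Q)^{p-1} ≤ C |Q|^p` and `σ(E) ≤ σ(Q)` this yields `|E|^p w(Q) ≤ C |Q|^p w(E)` for `E ⊆ Q`.
For `E = Q \ S` we have `|E| ≥ (1 - δ)|Q|`, hence `w(Q \ S) ≥ (1 - δ)^p / C · w(Q)`, and
`ε = 1 - (1 - δ)^p / max C 1` works. -/

section Muckenhoupt

variable {α : Type*} [MeasurableSpace α] {μ : Measure α} {p : ℝ} {w : α → ℝ}

/-- `MemApr n p r w` unfolds to `∃ C, ∀ z, apCharacteristic volume p w (cube n r z) ≤ ofReal C`. -/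
def apCharacteristic (μ : Measure α) (p : ℝ) (w : α → ℝ) (s : Set α) : ℝ≥0∞ :=
  ((μ s)⁻¹ * ∫⁻ x in s, ENNReal.ofReal (w x) ∂μ) *
    ((μ s)⁻¹ * ∫⁻ x in s, ENNReal.ofReal (w x ^ (-(1 / (p - 1)))) ∂μ) ^ (p - 1)

lemma apCharacteristic_eq_div (hp : 1 ≤ p) {s : Set α} (h0 : μ s ≠ 0) (htop : μ s ≠ ⊤) :
    apCharacteristic μ p w s =
      (∫⁻ x in s, ENNReal.ofReal (w x) ∂μ) *
        (∫⁻ x in s, ENNReal.ofReal (w x ^ (-(1 / (p - 1)))) ∂μ) ^ (p - 1) / μ s ^ p := by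
  have hpow : μ s ^ p = μ s * μ s ^ (p - 1) := by
    simpa using ENNReal.rpow_add_of_nonneg (x := μ s) 1 (p - 1) zero_le_one (by linarith)
  rw [apCharacteristic, ENNReal.mul_rpow_of_nonneg _ _ (by linarith), ENNReal.inv_rpow, hpow,
    ENNReal.div_eq_inv_mul, ENNReal.mul_inv (Or.inl h0) (Or.inl htop)]
  ring

lemma measure_rpow_le_setLIntegral_mul_setLIntegral_rpow (hp : 1 < p) (hw : AEMeasurable w μ)
    (hpos : ∀ᵐ x ∂μ, 0 < w x) (s : Set α) :
    μ s ^ p ≤ (∫⁻ x in s, ENNReal.ofReal (w x) ∂μ) *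
      (∫⁻ x in s, ENNReal.ofReal (w x ^ (-(1 / (p - 1)))) ∂μ) ^ (p - 1) := by
  set q := p.conjExponent
  have hpq : p.HolderConjugate q := .conjExponent hp
  have hp0 : 0 < p := by linarith
  set f : α → ℝ≥0∞ := fun x ↦ ENNReal.ofReal (w x)
  have hf : AEMeasurable f (μ.restrict s) := hw.ennreal_ofReal.restrict
  have hpos_s : ∀ᵐ x ∂μ.restrict s, 0 < w x := ae_restrict_of_ae hpos
  have hone : (fun x ↦ f x ^ (1 / p)) * (fun x ↦ f x ^ (-(1 / p))) =ᵐ[μ.restrict s] 1 := by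
    filter_upwards [hpos_s] with x hx
    rw [Pi.mul_apply, ← ENNReal.rpow_add _ _ (ENNReal.ofReal_pos.mpr hx).ne' ENNReal.ofReal_ne_top]
    simp
  have hfirst : ∫⁻ x in s, (f x ^ (1 / p)) ^ p ∂μ = ∫⁻ x in s, f x ∂μ := by
    simp_rw [← ENNReal.rpow_mul, one_div_mul_cancel hp0.ne', ENNReal.rpow_one]
  have hsecond : ∫⁻ x in s, (f x ^ (-(1 / p))) ^ q ∂μ =
      ∫⁻ x in s, ENNReal.ofReal (w x ^ (-(1 / (p - 1)))) ∂μ := by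
    refine lintegral_congr_ae ?_
    filter_upwards [hpos_s] with x hx
    rw [← ENNReal.rpow_mul, ENNReal.ofReal_rpow_of_pos hx]
    congr 1
    simp only [q, Real.conjExponent]
    field_simp
  have holder := ENNReal.lintegral_mul_le_Lp_mul_Lq (μ.restrict s) hpq
    (hf.pow_const (1 / p)) (hf.pow_const (-(1 / p)))
  rw [lintegral_congr_ae hone, Pi.one_def, setLIntegral_one, hfirst, hsecond] at holder
  calc μ s ^ p ≤ ((∫⁻ x in s, f x ∂μ) ^ (1 / p) *
          (∫⁻ x in s, ENNReal.ofReal (w x ^ (-(1 / (p - 1)))) ∂μ) ^ (1 / q)) ^ p :=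
        ENNReal.rpow_le_rpow holder hp0.le
    _ = _ := by
      rw [ENNReal.mul_rpow_of_nonneg _ _ hp0.le, ← ENNReal.rpow_mul, ← ENNReal.rpow_mul,
        one_div_mul_cancel hp0.ne', ENNReal.rpow_one]
      congr 2
      simp only [q, Real.conjExponent]
      field_simp

lemma measure_rpow_mul_setLIntegral_le_of_apCharacteristic_le (hp : 1 < p)
    (hw : AEMeasurable w μ) (hpos : ∀ᵐ x ∂μ, 0 < w x) {s t : Set α} (hst : s ⊆ t)
    (h0 : μ t ≠ 0) (htop : μ t ≠ ⊤) {c : ℝ≥0∞} (hc : apCharacteristic μ p w t ≤ c) :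
    μ s ^ p * ∫⁻ x in t, ENNReal.ofReal (w x) ∂μ ≤
      c * μ t ^ p * ∫⁻ x in s, ENNReal.ofReal (w x) ∂μ := by
  have hp0 : 0 < p := by linarith
  rw [apCharacteristic_eq_div hp.le h0 htop, ENNReal.div_le_iff
    (ENNReal.rpow_pos (pos_iff_ne_zero.mpr h0) htop).ne'
    (ENNReal.rpow_lt_top_of_nonneg hp0.le htop).ne] at hc
  set wt := ∫⁻ x in t, ENNReal.ofReal (w x) ∂μ
  set ws := ∫⁻ x in s, ENNReal.ofReal (w x) ∂μ
  have hσ : ∫⁻ x in s, ENNReal.ofReal (w x ^ (-(1 / (p - 1)))) ∂μ ≤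
      ∫⁻ x in t, ENNReal.ofReal (w x ^ (-(1 / (p - 1)))) ∂μ := lintegral_mono_set hst
  calc μ s ^ p * wt
      ≤ ws * (∫⁻ x in s, ENNReal.ofReal (w x ^ (-(1 / (p - 1)))) ∂μ) ^ (p - 1) * wt := by
        gcongr
        exact measure_rpow_le_setLIntegral_mul_setLIntegral_rpow hp hw hpos s
    _ ≤ ws * (∫⁻ x in t, ENNReal.ofReal (w x ^ (-(1 / (p - 1)))) ∂μ) ^ (p - 1) * wt := by
        gcongr
    _ = ws * (wt * (∫⁻ x in t, ENNReal.ofReal (w x ^ (-(1 / (p - 1)))) ∂μ) ^ (p - 1)) := by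
        ring
    _ ≤ c * μ t ^ p * ws := by
        rw [mul_comm]
        gcongr

lemma ofReal_one_sub_mul_le_measure_sdiff {s t : Set α} (htop : μ t ≠ ⊤) {δ : ℝ} (hδ : 0 ≤ δ)
    (hs : μ s ≤ ENNReal.ofReal δ * μ t) : ENNReal.ofReal (1 - δ) * μ t ≤ μ (t \ s) :=
  calc ENNReal.ofReal (1 - δ) * μ t = μ t - ENNReal.ofReal δ * μ t := by
        rw [ENNReal.ofReal_sub 1 hδ, ENNReal.ofReal_one, ENNReal.sub_mul fun _ _ ↦ htop, one_mul]
    _ ≤ μ t - μ s := tsub_le_tsub_left hs _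
    _ ≤ μ (t \ s) := le_measure_sdiff

lemma setLIntegral_le_of_measure_le_of_apCharacteristic_le (hp : 1 < p)
    (hw : AEMeasurable w μ) (hpos : ∀ᵐ x ∂μ, 0 < w x) {s t : Set α} (hs : MeasurableSet s)
    (hst : s ⊆ t) (h0 : μ t ≠ 0) (htop : μ t ≠ ⊤) (hwt : ∫⁻ x in t, ENNReal.ofReal (w x) ∂μ ≠ ⊤)
    {C : ℝ} (hC : 0 < C) (hc : apCharacteristic μ p w t ≤ ENNReal.ofReal C) {δ : ℝ} (hδ0 : 0 ≤ δ)
    (hδ1 : δ ≤ 1) (hsδ : μ s ≤ ENNReal.ofReal δ * μ t) :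
    ∫⁻ x in s, ENNReal.ofReal (w x) ∂μ ≤
      ENNReal.ofReal (1 - (1 - δ) ^ p / C) * ∫⁻ x in t, ENNReal.ofReal (w x) ∂μ := by
  set κ := (1 - δ) ^ p / C
  set wt := ∫⁻ x in t, ENNReal.ofReal (w x) ∂μ
  set wts := ∫⁻ x in t \ s, ENNReal.ofReal (w x) ∂μ
  have hκ : 0 ≤ κ := div_nonneg (Real.rpow_nonneg (by linarith) p) hC.le
  have hκC : ENNReal.ofReal κ * ENNReal.ofReal C = ENNReal.ofReal ((1 - δ) ^ p) := by
    rw [← ENNReal.ofReal_mul hκ, div_mul_cancel₀ _ hC.ne']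
  have htp0 : μ t ^ p ≠ 0 := (ENNReal.rpow_pos (pos_iff_ne_zero.mpr h0) htop).ne'
  have htptop : μ t ^ p ≠ ⊤ := (ENNReal.rpow_lt_top_of_nonneg (by linarith) htop).ne
  have hlarge : ENNReal.ofReal κ * wt ≤ wts := by
    refine (ENNReal.mul_le_mul_iff_left (c := ENNReal.ofReal C * μ t ^ p)
      (mul_ne_zero (ENNReal.ofReal_pos.mpr hC).ne' htp0)
      (ENNReal.mul_ne_top ENNReal.ofReal_ne_top htptop)).mp ?_
    calc ENNReal.ofReal κ * wt * (ENNReal.ofReal C * μ t ^ p)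
        = (ENNReal.ofReal (1 - δ) * μ t) ^ p * wt := by
          rw [ENNReal.mul_rpow_of_nonneg _ _ (by linarith),
            ENNReal.ofReal_rpow_of_nonneg (by linarith) (by linarith), ← hκC]
          ring
      _ ≤ μ (t \ s) ^ p * wt := by
          gcongr
          exact ofReal_one_sub_mul_le_measure_sdiff htop hδ0 hsδ
      _ ≤ ENNReal.ofReal C * μ t ^ p * wts :=
          measure_rpow_mul_setLIntegral_le_of_apCharacteristic_le hp hw hpos Set.sdiff_subset
            h0 htop hc
      _ = wts * (ENNReal.ofReal C * μ t ^ p) := by ring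
  have hsplit : ∫⁻ x in s, ENNReal.ofReal (w x) ∂μ = wt - wts := by
    refine ENNReal.eq_sub_of_add_eq
      (ne_top_of_le_ne_top hwt (lintegral_mono_set Set.sdiff_subset)) ?_
    rw [← Set.inter_eq_right.mpr hst]
    exact lintegral_inter_add_sdiff _ t hs
  calc ∫⁻ x in s, ENNReal.ofReal (w x) ∂μ = wt - wts := hsplit
    _ ≤ wt - ENNReal.ofReal κ * wt := tsub_le_tsub_left hlarge _
    _ = ENNReal.ofReal (1 - κ) * wt := by
        rw [ENNReal.ofReal_sub 1 hκ, ENNReal.ofReal_one, ENNReal.sub_mul fun _ _ ↦ hwt, one_mul]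

end Muckenhoupt

section Cube

variable {n : ℕ} {r : ℝ}

lemma isClosed_cube (z : En n) : IsClosed (cube n r z) := by
  simp only [cube, Set.ofPred_forall, Set.ofPred_and]
  exact isClosed_iInter fun j ↦ (isClosed_le (by fun_prop) continuous_const).inter
    (isClosed_le (by fun_prop) continuous_const)

lemma ball_subset_cube (z : En n) : ball z (r / 2) ⊆ cube n r z := by
  intro u hu j
  have hj : ‖u j - z j‖ < r / 2 :=
    (PiLp.norm_apply_le (u - z) j).trans_lt (mem_ball_iff_norm.mp hu)
  have hre := Complex.abs_re_le_norm (u j - z j)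
  have him := Complex.abs_im_le_norm (u j - z j)
  rw [Complex.sub_re] at hre
  rw [Complex.sub_im] at him
  exact ⟨by linarith, by linarith⟩

lemma cube_subset_closedBall (hr : 0 ≤ r) (z : En n) :
    cube n r z ⊆ closedBall z (Real.sqrt n * r) := by
  intro u hu
  have hj : ∀ j, ‖(u - z) j‖ ^ 2 ≤ r ^ 2 := fun j ↦ by
    have h := Complex.norm_le_abs_re_add_abs_im (u j - z j)
    rw [Complex.sub_re, Complex.sub_im] at h
    have := hu j
    gcongr
    rw [PiLp.sub_apply]
    linarith
  rw [mem_closedBall, dist_eq_norm, EuclideanSpace.norm_eq, ← Real.sqrt_sq hr,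
    ← Real.sqrt_mul (Nat.cast_nonneg n)]
  gcongr
  simpa using Finset.sum_le_sum fun j (_ : j ∈ Finset.univ) ↦ hj j

lemma isCompact_cube (hr : 0 ≤ r) (z : En n) : IsCompact (cube n r z) :=
  isCompact_of_isClosed_isBounded (isClosed_cube z)
    (isBounded_closedBall.subset (cube_subset_closedBall hr z))

lemma volume_cube_ne_zero (hr : 0 < r) (z : En n) : volume (cube n r z) ≠ 0 :=
  ((measure_ball_pos volume z (half_pos hr)).trans_le
    (measure_mono (ball_subset_cube z))).ne'

end Cube

theorem small_sets_of_Apr_general (n : ℕ) (p r : ℝ) (hp : 1 < p) (hr : 0 < r)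
    (w : En n → ℝ) (hw : IsWeight n w) (hApr : MemApr n p r w) :
    ∀ δ : ℝ, 0 < δ → δ < 1 → ∃ ε : ℝ, 0 < ε ∧ ε < 1 ∧
      ∀ (z : En n) (S : Set (En n)), MeasurableSet S → S ⊆ cube n r z →
        volume S ≤ ENNReal.ofReal δ * volume (cube n r z) →
        (∫⁻ u in S, ENNReal.ofReal (w u))
          ≤ ENNReal.ofReal ε * ∫⁻ u in cube n r z, ENNReal.ofReal (w u) := by
  obtain ⟨hwm, hpos, hloc⟩ := hw
  obtain ⟨C, hC⟩ := hApr
  intro δ hδ0 hδ1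
  have hC' : 0 < max C 1 := lt_max_of_lt_right one_pos
  have hκ0 : 0 < (1 - δ) ^ p / max C 1 := div_pos (Real.rpow_pos_of_pos (by linarith) p) hC'
  have hκ1 : (1 - δ) ^ p / max C 1 < 1 :=
    (div_le_self (Real.rpow_nonneg (by linarith) p) (le_max_right C 1)).trans_lt
      (Real.rpow_lt_one (by linarith) (by linarith) (by linarith))
  refine ⟨1 - (1 - δ) ^ p / max C 1, by linarith, by linarith, fun z S hS hSQ hSδ ↦ ?_⟩
  have hQ := isCompact_cube hr.le z
  exact setLIntegral_le_of_measure_le_of_apCharacteristic_le hp hwm.aemeasurable hpos hS hSQ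
    (volume_cube_ne_zero hr z) hQ.measure_lt_top.ne
    (hloc.integrableOn_isCompact hQ).lintegral_lt_top.ne hC'
    ((hC z).trans (ENNReal.ofReal_le_ofReal (le_max_left C 1))) hδ0.le hδ1.le hSδ

/-- if `w ∈ A_{p,r}` then small portions of cubes of side `r`
carry a small proportion of the weight. -/
theorem small_sets_of_Apr (n : ℕ) (hn : 1 ≤ n) (p r : ℝ) (hp : 1 < p) (hr : 0 < r)
    (w : En n → ℝ) (hw : IsWeight n w) (hApr : MemApr n p r w) :
    ∀ δ : ℝ, 0 < δ → δ < 1 → ∃ ε : ℝ, 0 < ε ∧ ε < 1 ∧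
      ∀ (z : En n) (S : Set (En n)), MeasurableSet S → S ⊆ cube n r z →
        volume S ≤ ENNReal.ofReal δ * volume (cube n r z) →
        (∫⁻ u in S, ENNReal.ofReal (w u))
          ≤ ENNReal.ofReal ε * ∫⁻ u in cube n r z, ENNReal.ofReal (w u) :=
  small_sets_of_Apr_general n p r hp hr w hw hApr

end
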